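/- Let P be a shortest solution path (a minimum-length (s,t)-path among those of length at least dist_G(s,t)+2k, with k ≥ 1), let p be the smallest index such that layer L_p contains more than one vertex of P, and let u, v be the first and second vertices of P in L_p. Then the subpath of P from u to v has length strictly greater than k. -/

import Mathlib

variable {V : Type*}

/-- `l` is a (nonempty) directed walk in the digraph `G`. -/
def IsWalk (G : V → V → Prop) : List V → Prop
  | [] => False
  | [_] => True
  | a :: b :: l => G a b ∧ IsWalk G (b :: l)

/-- `l` is a simple directed path in `G`. -/
def IsPath (G : V → V → Prop) (l : List V) : Prop := IsWalk G l ∧ l.Nodup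

/-- `l` is a walk from `s` to `t` in `G`. -/
def IsWalkFrom (G : V → V → Prop) (s t : V) (l : List V) : Prop :=
  IsWalk G l ∧ l.head? = some s ∧ l.getLast? = some t

/-- `l` is a simple path from `s` to `t` in `G`. -/
def IsPathFrom (G : V → V → Prop) (s t : V) (l : List V) : Prop :=
  IsPath G l ∧ l.head? = some s ∧ l.getLast? = some t

/-- The length (number of edges) of a path given as a vertex list. -/
def pathLen (l : List V) : ℕ := l.length - 1

/-- Directed shortest-path distance (`⊤` if unreachable). -/
noncomputable def ddist (G : V → V → Prop) (s t : V) : ℕ∞ :=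
  sInf {n : ℕ∞ | ∃ l, IsPathFrom G s t l ∧ (pathLen l : ℕ∞) = n}

/-! Let `f j` be the layer of the `j`-th vertex of `P`, so `f j ≤ j`. Layers below `p` meet `P`
at most once and `P` avoids `L_p` before `u`; by induction `f j = j` up to `u`, so `u` sits at
position `p` and the prefix before `u` uses up every layer below `p`. Hence `P` stays in layers
`≥ p` from `v` on, and replacing its prefix up to `v` by a shortest `(s,v)`-path (whose earlier
vertices lie in layers `< p`) gives an `(s,t)`-path shorter by exactly the length `ℓ` of the
`u`–`v` subpath. If `ℓ ≤ k`, that path still has length `≥ dist(s,t) + k`, hence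
`≥ dist(s,t) + 2k` by the gap hypothesis, contradicting the minimality of `P`. -/

theorem Nat.apply_eq_self_of_apply_le_self {f : ℕ → ℕ} {n p : ℕ} (hle : ∀ j ≤ n, f j ≤ j)
    (hne : ∀ j < n, f j ≠ p) (hinj : ∀ i j, i < j → j ≤ n → f i = f j → p ≤ f i) :
    ∀ j ≤ n, f j = j := by
  suffices h : ∀ j ≤ n, f j = j ∧ j ≤ p from fun j hj => (h j hj).1
  intro j
  induction j using Nat.strong_induction_on with
  | _ j ih =>
  intro hj
  rcases j with _ | i
  · exact ⟨Nat.le_zero.1 (hle 0 hj), Nat.zero_le _⟩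
  obtain ⟨hfi, hip⟩ := ih i (Nat.lt_succ_self i) (by omega)
  have hip' : i < p := lt_of_le_of_ne hip (hfi ▸ hne i (by omega))
  refine ⟨le_antisymm (hle _ hj) (not_lt.1 fun hlt => ?_), hip'⟩
  have hq := (ih _ hlt (by omega)).1
  have := hinj _ _ hlt hj hq
  omega

theorem Nat.eq_and_le_apply_of_apply_le_self {f : ℕ → ℕ} {n p L : ℕ} (hle : ∀ j ≤ n, f j ≤ j)
    (hfn : f n = p) (hne : ∀ j < n, f j ≠ p) (hinj : ∀ i j, i < j → j < L → f i = f j → p ≤ f i)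
    (hnL : n < L) :
    n = p ∧ ∀ m, n < m → m < L → p ≤ f m := by
  have hid := Nat.apply_eq_self_of_apply_le_self hle hne fun i j hij hj => hinj i j hij (by omega)
  have hnp : n = p := (hid n le_rfl).symm.trans hfn
  refine ⟨hnp, fun m hnm hm => not_lt.1 fun hlt => ?_⟩
  have hq := hid (f m) (by omega)
  have := hinj (f m) m (by omega) hm hq
  omega

section Paths
variable {G : V → V → Prop} {s t x : V} {l P : List V}

theorem isWalk_iff_isChain : ∀ {l : List V}, IsWalk G l ↔ l ≠ [] ∧ l.IsChain G
  | [] => by simp [IsWalk]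
  | [_] => by simp [IsWalk]
  | _ :: b :: l => by simp [IsWalk, isWalk_iff_isChain (l := b :: l)]

theorem IsPathFrom.take (h : IsPathFrom G s t l) {n : ℕ} (hn : n < l.length) :
    IsPathFrom G s l[n] (l.take (n + 1)) := by
  obtain ⟨⟨hw, hnd⟩, hs, -⟩ := h
  rw [isWalk_iff_isChain] at hw
  refine ⟨⟨isWalk_iff_isChain.2 ⟨by simp [hw.1], hw.2.take _⟩,
    hnd.sublist (List.take_sublist _ _)⟩, ?_, ?_⟩
  · rw [List.head?_take]; simpa using hs
  · simp [List.getLast?_take, List.getElem?_eq_getElem hn]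

theorem IsPathFrom.drop (h : IsPathFrom G s t l) {n : ℕ} (hn : n < l.length) :
    IsPathFrom G l[n] t (l.drop n) := by
  obtain ⟨⟨hw, hnd⟩, -, ht⟩ := h
  rw [isWalk_iff_isChain] at hw
  refine ⟨⟨isWalk_iff_isChain.2 ⟨by simpa using hn, hw.2.drop _⟩,
    hnd.sublist (List.drop_sublist _ _)⟩,
    by simp [List.head?_drop, List.getElem?_eq_getElem hn], ?_⟩
  rw [List.getLast?_drop, if_neg (by omega), ht]

theorem IsPathFrom.dropLast_append {S R : List V} (hS : IsPathFrom G s x S)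
    (hR : IsPathFrom G x t R) (hdisj : S.dropLast.Disjoint R) :
    IsPathFrom G s t (S.dropLast ++ R) := by
  obtain ⟨⟨hSw, hSnd⟩, hSs, hSx⟩ := hS
  obtain ⟨⟨hRw, hRnd⟩, hRx, hRt⟩ := hR
  rw [isWalk_iff_isChain] at hSw hRw
  have hSsplit : S.dropLast ++ [x] = S := List.dropLast_append_getLast? x hSx
  obtain ⟨R', rfl⟩ : ∃ R', R = x :: R' := by
    cases R with
    | nil => simp at hRw
    | cons y R' => simp at hRx; exact ⟨R', by rw [hRx]⟩
  refine ⟨⟨isWalk_iff_isChain.2 ⟨by simp, ?_⟩,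
    (hSnd.sublist (List.dropLast_sublist _)).append hRnd hdisj⟩, ?_,
    by rwa [List.getLast?_append_of_ne_nil _ (List.cons_ne_nil _ _)]⟩
  · rw [← hSsplit] at hSw
    simpa using hSw.2.append_overlap hRw.2 (List.cons_ne_nil _ _)
  · rw [← hSsplit, List.head?_append] at hSs
    simpa [List.head?_append] using hSs

theorem ddist_le_pathLen (h : IsPathFrom G s t l) : ddist G s t ≤ pathLen l :=
  sInf_le ⟨l, h, rfl⟩

theorem ddist_ne_top (h : IsPathFrom G s t l) : ddist G s t ≠ ⊤ :=
  ((ddist_le_pathLen h).trans_lt (ENat.natCast_lt_top _)).ne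

theorem exists_isPathFrom_pathLen_eq_ddist (h : IsPathFrom G s t l) :
    ∃ S, IsPathFrom G s t S ∧ (pathLen S : ℕ∞) = ddist G s t :=
  csInf_mem (s := {n : ℕ∞ | ∃ l, IsPathFrom G s t l ∧ (pathLen l : ℕ∞) = n}) ⟨_, l, h, rfl⟩

theorem ddist_getElem_le (h : IsPathFrom G s t l) {n : ℕ} (hn : n < l.length) :
    ddist G s l[n] ≤ n := by
  simpa [pathLen, Nat.min_eq_left (Nat.succ_le_of_lt hn)] using ddist_le_pathLen (h.take hn)

theorem ddist_lt_pathLen_of_mem_dropLast (h : IsPathFrom G s t l) {y : V} (hy : y ∈ l.dropLast) :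
    ddist G s y < pathLen l := by
  obtain ⟨i, hi, rfl⟩ := List.mem_iff_getElem.1 hy
  have hil : i < pathLen l := by simpa [pathLen] using hi
  rw [List.getElem_dropLast]
  exact (ddist_getElem_le h _).trans_lt (by exact_mod_cast hil)

theorem IsPathFrom.exists_pathLen_add_eq_of_le_ddist (hP : IsPathFrom G s t l) {v n : ℕ}
    (hv : v < l.length) (hvn : ddist G s (l.getD v s) = n)
    (hsuf : ∀ m, v ≤ m → m < l.length → (n : ℕ∞) ≤ ddist G s (l.getD m s)) :
    ∃ Q, IsPathFrom G s t Q ∧ pathLen Q + v = n + pathLen l := by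
  obtain ⟨S, hS, hSlen⟩ := exists_isPathFrom_pathLen_eq_ddist (hP.take hv)
  rw [← List.getD_eq_getElem _ s, hvn, Nat.cast_inj] at hSlen
  have hdisj : S.dropLast.Disjoint (l.drop v) := by
    rw [List.disjoint_iff_ne]
    rintro y hyS _ hyR rfl
    obtain ⟨j, hj, rfl⟩ := List.mem_drop_iff_getElem.1 hyR
    have hlt := ddist_lt_pathLen_of_mem_dropLast hS hyS
    rw [hSlen, ← List.getD_eq_getElem _ s] at hlt
    exact hlt.not_ge (hsuf (v + j) (Nat.le_add_right _ _) (by omega))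
  refine ⟨_, hS.dropLast_append (hP.drop hv) hdisj, ?_⟩
  simp only [pathLen, List.length_append, List.length_dropLast, List.length_drop] at hSlen ⊢
  omega

theorem IsPathFrom.eq_and_le_ddist_getD (hP : IsPathFrom G s t P) {n p : ℕ} (hn : n < P.length)
    (hnp : ddist G s (P.getD n s) = p)
    (hfirst : ∀ m < n, ddist G s (P.getD m s) ≠ p)
    (hsep : ∀ q < p, ∀ a ∈ P, ∀ b ∈ P, ddist G s a = q → ddist G s b = q → a = b) :
    n = p ∧ ∀ m, n < m → m < P.length → (p : ℕ∞) ≤ ddist G s (P.getD m s) := by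
  obtain ⟨g, hg_def⟩ : ∃ g : ℕ → ℕ, ∀ j, g j = (ddist G s (P.getD j s)).toNat := ⟨_, fun _ => rfl⟩
  have hg : ∀ j < P.length, (g j : ℕ∞) = ddist G s (P.getD j s) := fun j hj => by
    rw [hg_def, ENat.natCast_toNat]
    rw [List.getD_eq_getElem _ _ hj]; exact ddist_ne_top (hP.take hj)
  have hgle : ∀ j < P.length, g j ≤ j := fun j hj => by
    have := ddist_getElem_le hP hj
    rw [← List.getD_eq_getElem _ s, ← hg j hj] at this
    exact_mod_cast this
  have hinj : ∀ i j, i < j → j < P.length → g i = g j → p ≤ g i := by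
    intro i j hij hj hgij
    by_contra! hlt
    have hi : i < P.length := hij.trans hj
    have := hsep (g i) hlt (P.getD i s)
      (by rw [List.getD_eq_getElem _ _ hi]; exact List.getElem_mem hi) (P.getD j s)
      (by rw [List.getD_eq_getElem _ _ hj]; exact List.getElem_mem hj)
      (hg i hi).symm (by rw [← hg j hj, hgij])
    rw [List.getD_eq_getElem _ _ hi, List.getD_eq_getElem _ _ hj, hP.1.2.getElem_inj_iff] at this
    exact hij.ne this
  obtain ⟨hnp', hsuf⟩ := Nat.eq_and_le_apply_of_apply_le_self (fun j hj => hgle j (by omega))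
    (by rw [hg_def, hnp, ENat.toNat_natCast])
    (fun j hj hgj => hfirst j hj (by rw [← hg j (by omega), hgj])) hinj hn
  exact ⟨hnp', fun m hnm hm => hg m hm ▸ Nat.cast_le.2 (hsuf m hnm hm)⟩

end Paths

theorem stmt_4_general (G : V → V → Prop) (s t : V) (k p : ℕ) (P : List V) (iu iv : ℕ)
    (hgap : ∀ Q, IsPathFrom G s t Q → ddist G s t + (k : ℕ∞) ≤ (pathLen Q : ℕ∞) →
      ddist G s t + ((2*k : ℕ) : ℕ∞) ≤ (pathLen Q : ℕ∞))
    (hP : IsPathFrom G s t P)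
    (hPsol : ddist G s t + ((2*k : ℕ) : ℕ∞) ≤ (pathLen P : ℕ∞))
    (hmin : ∀ Q, IsPathFrom G s t Q → ddist G s t + ((2*k : ℕ) : ℕ∞) ≤ (pathLen Q : ℕ∞) →
      pathLen P ≤ pathLen Q)
    (hiu : iu < iv) (hiv : iv < P.length)
    (hu : ddist G s (P.getD iu s) = (p : ℕ∞)) (hv : ddist G s (P.getD iv s) = (p : ℕ∞))
    (hfirst : ∀ m < iu, ddist G s (P.getD m s) ≠ (p : ℕ∞))
    (hpmin : ∀ q : ℕ, q < p →
      ¬ ∃ a ∈ P, ∃ b ∈ P, a ≠ b ∧ ddist G s a = (q : ℕ∞) ∧ ddist G s b = (q : ℕ∞)) :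
    k < iv - iu := by
  obtain ⟨rfl, hsuf⟩ := hP.eq_and_le_ddist_getD (hiu.trans hiv) hu hfirst
    fun q hq a ha b hb hqa hqb => by_contra fun hab => hpmin q hq ⟨a, ha, b, hb, hab, hqa, hqb⟩
  obtain ⟨Q, hQ, hQlen⟩ := hP.exists_pathLen_add_eq_of_le_ddist hiv hv fun m hvm hm =>
    hvm.eq_or_lt.elim (fun h => h ▸ hv.ge) fun hvm => hsuf m (hiu.trans hvm) hm
  by_contra! hk
  obtain ⟨d, hd⟩ := ENat.ne_top_iff_exists.1 (ddist_ne_top hP)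
  rw [← hd] at hgap hmin hPsol
  norm_cast at hgap hmin hPsol
  have := hmin Q hQ (hgap Q hQ (by omega))
  omega

theorem stmt_4 (G : V → V → Prop) (s t : V) (k p : ℕ) (P : List V) (iu iv : ℕ)
    (hreach : ∀ w : V, ∃ l, IsPathFrom G s w l)
    (hk : 1 ≤ k)
    (hgap : ∀ Q, IsPathFrom G s t Q → ddist G s t + (k : ℕ∞) ≤ (pathLen Q : ℕ∞) →
      ddist G s t + ((2*k : ℕ) : ℕ∞) ≤ (pathLen Q : ℕ∞))
    (hP : IsPathFrom G s t P)
    (hPsol : ddist G s t + ((2*k : ℕ) : ℕ∞) ≤ (pathLen P : ℕ∞))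
    (hmin : ∀ Q, IsPathFrom G s t Q → ddist G s t + ((2*k : ℕ) : ℕ∞) ≤ (pathLen Q : ℕ∞) →
      pathLen P ≤ pathLen Q)
    (hiu : iu < iv) (hiv : iv < P.length)
    (hu : ddist G s (P.getD iu s) = (p : ℕ∞)) (hv : ddist G s (P.getD iv s) = (p : ℕ∞))
    (hfirst : ∀ m < iu, ddist G s (P.getD m s) ≠ (p : ℕ∞))
    (hsecond : ∀ m, iu < m → m < iv → ddist G s (P.getD m s) ≠ (p : ℕ∞))
    (hpmin : ∀ q : ℕ, q < p →
      ¬ ∃ a ∈ P, ∃ b ∈ P, a ≠ b ∧ ddist G s a = (q : ℕ∞) ∧ ddist G s b = (q : ℕ∞)) :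
    k < iv - iu :=
  stmt_4_general G s t k p P iu iv hgap hP hPsol hmin hiu hiv hu hv hfirst hpmin
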